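/- arXiv:2007.11177 — 3 statements merged into one kernel-verified Lean document; each statement's English description precedes it below -/
import Mathlib

section
/- Let A be an abelian group, Φ: Γ(A) → A/2A the homomorphism with Φ(γ(a)) = a mod 2A, and Θ: A ⊗_ℤ A → Γ(A) the homomorphism with Θ(a ⊗ b) = γ(a+b) - γ(a) - γ(b). Then the sequence A ⊗_ℤ A → Γ(A) → A/2A → 0 is exact: Φ is surjective and ker(Φ) = im(Θ). -/
open FreeAbelianGroup

/-- The relations defining Whitehead's quadratic functor: `w a = w (-a)` and
`w (a+b+c) - w (a+b) - w (a+c) - w (b+c) + w a + w b + w c = 0`. -/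
def gammaRelations (A : Type) [AddCommGroup A] : AddSubgroup (FreeAbelianGroup A) :=
  AddSubgroup.closure
    ({x | ∃ a : A, x = of a - of (-a)} ∪
     {x | ∃ a b c : A,
        x = of (a + b + c) - of (a + b) - of (a + c) - of (b + c) + of a + of b + of c})

/-- Whitehead's quadratic functor `Γ(A)`: the free abelian group on symbols `w a`, `a ∈ A`,
modulo the relations `w a = w (-a)` and
`w (a+b+c) - w (a+b) - w (a+c) - w (b+c) + w a + w b + w c = 0`. -/
def Gamma (A : Type) [AddCommGroup A] : Type :=
  FreeAbelianGroup A ⧸ gammaRelations A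

instance (A : Type) [AddCommGroup A] : AddCommGroup (Gamma A) :=
  QuotientAddGroup.Quotient.addCommGroup _

/-- The universal quadratic map `γ : A → Γ(A)`. -/
def gam {A : Type} [AddCommGroup A] (a : A) : Gamma A :=
  QuotientAddGroup.mk (of a)

/-- The subgroup `2A` of `A`. -/
def twoSubgroup (A : Type) [AddCommGroup A] : AddSubgroup A :=
  (AddMonoidHom.mk' (fun a : A => 2 • a) (by intro a b; simp [smul_add])).range

/-! Modulo `im Θ` the map `γ` becomes additive, and being even it then kills `2A`; so it factors
through a map `A/2A → Γ(A)/im Θ` whose composite with `Φ` is the quotient map, which forces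
`ker Φ ⊆ im Θ`. Conversely `Φ ∘ Θ` vanishes on pure tensors because `Φ ∘ γ` is additive. -/

open QuotientAddGroup

section Gamma

variable {A : Type} [AddCommGroup A]

lemma gam_neg (a : A) : gam (-a) = gam a := by
  refine (eq_iff_sub_mem).mpr ?_
  rw [← neg_sub]
  exact (gammaRelations A).neg_mem (AddSubgroup.subset_closure (Or.inl ⟨a, rfl⟩))

lemma Gamma.addMonoidHom_ext {B : Type} [AddCommGroup B] {f g : Gamma A →+ B}
    (h : ∀ a : A, f (gam a) = g (gam a)) : f = g :=
  QuotientAddGroup.addMonoidHom_ext _ (FreeAbelianGroup.lift_ext _ _ h)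

variable (N : AddSubgroup (Gamma A)) (hN : ∀ a b : A, gam (a + b) - gam a - gam b ∈ N)

def gamModPolar : A →+ Gamma A ⧸ N :=
  AddMonoidHom.mk' (fun a => gam a) fun a b => by
    rw [← QuotientAddGroup.mk_add, eq_iff_sub_mem, ← sub_sub]
    exact hN a b

lemma gamModPolar_apply (a : A) : gamModPolar N hN a = gam a := rfl

lemma twoSubgroup_le_ker_gamModPolar : twoSubgroup A ≤ (gamModPolar N hN).ker := by
  rintro _ ⟨a, rfl⟩
  have h_even : gamModPolar N hN (-a) = gamModPolar N hN a := by
    simp only [gamModPolar_apply, gam_neg]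
  change gamModPolar N hN (2 • a) = 0
  rw [two_smul, map_add]
  nth_rewrite 1 [← h_even]
  rw [map_neg, neg_add_cancel]

/-- Inverts `Φ` modulo `N`, when `N = im Θ`. -/
def twoQuotientToGammaMod : A ⧸ twoSubgroup A →+ Gamma A ⧸ N :=
  QuotientAddGroup.lift _ (gamModPolar N hN) (twoSubgroup_le_ker_gamModPolar N hN)

end Gamma

open TensorProduct in
/-- If `Φ : Γ(A) → A/2A` satisfies `Φ (γ a) = a mod 2A` and `Θ : A ⊗ A → Γ(A)`
satisfies `Θ (a ⊗ b) = γ(a+b) - γ a - γ b`, then `A ⊗ A → Γ(A) → A/2A → 0` is exact: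
`Φ` is surjective and `ker Φ = im Θ`. -/
theorem stmt7 (A : Type) [AddCommGroup A]
    (Φ : Gamma A →+ A ⧸ twoSubgroup A)
    (hΦ : ∀ a : A, Φ (gam a) = QuotientAddGroup.mk a)
    (Θ : TensorProduct ℤ A A →+ Gamma A)
    (hΘ : ∀ a b : A, Θ (a ⊗ₜ[ℤ] b) = gam (a + b) - gam a - gam b) :
    Function.Surjective Φ ∧ Φ.ker = Θ.range := by
  refine ⟨fun q => ?_, le_antisymm ?_ ?_⟩
  · obtain ⟨a, rfl⟩ := mk_surjective q
    exact ⟨gam a, hΦ a⟩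
  · have hN : ∀ a b : A, gam (a + b) - gam a - gam b ∈ Θ.range := fun a b => ⟨a ⊗ₜ b, hΘ a b⟩
    have h_inv : (twoQuotientToGammaMod Θ.range hN).comp Φ = mk' Θ.range :=
      Gamma.addMonoidHom_ext fun a => by simp [twoQuotientToGammaMod, hΦ, gamModPolar_apply]
    intro x hx
    refine (eq_zero_iff x).mp ?_
    rw [← mk'_apply, ← h_inv, AddMonoidHom.comp_apply, AddMonoidHom.mem_ker.mp hx, map_zero]
  · rintro _ ⟨t, rfl⟩
    induction t using TensorProduct.induction_on with
    | zero => simp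
    | tmul a b => simp [hΘ, hΦ]
    | add s t hs ht => simp_all
end

section
/- Let A be an abelian group and Θ: A ⊗_ℤ A → Γ(A) the homomorphism with Θ(a ⊗ b) = γ(a+b) - γ(a) - γ(b). Then ker(Θ) is the subgroup of A ⊗_ℤ A generated by the elements a ⊗ b - b ⊗ a, a, b ∈ A. Consequently Θ induces an injection (A ⊗_ℤ A)/⟨a⊗b - b⊗a⟩ ↪ Γ(A). -/
open FreeAbelianGroup

/-! The inclusion `⟨a ⊗ b - b ⊗ a⟩ ≤ ker Θ` is immediate. For the converse let
`S = A ⊗ A / ⟨a ⊗ b - b ⊗ a⟩`, with symmetric product `μ`, and let `E` be the central extension of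
`A` by `S` with cocycle `μ`. The section `a ↦ (0, a)` is quadratic with polarization `-μ`, and it
satisfies `γ a = γ (-a)` modulo `D = {(2 μ t t, 2 t)}`, so it induces `φ : Γ(A) → E / D` with
`φ (Θ z) = [(-[z], 0)]`. If `Θ z = 0` then `(-[z], 0) = (2 μ t t, 2 t)` for some `t`, and `2 t = 0`
gives `2 μ t t = μ (2 t) t = 0`, so `[z] = 0`. -/

section

open TensorProduct

namespace Gamma

variable {A : Type} [AddCommGroup A] {G : Type*} [AddCommGroup G]

def lift (f : A → G) (hneg : ∀ a, f a = f (-a))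
    (hquad : ∀ a b c,
      f (a + b + c) - f (a + b) - f (a + c) - f (b + c) + f a + f b + f c = 0) :
    Gamma A →+ G :=
  QuotientAddGroup.lift _ (FreeAbelianGroup.lift f) <| by
    rw [gammaRelations, AddSubgroup.closure_le]
    rintro x (⟨a, rfl⟩ | ⟨a, b, c, rfl⟩) <;>
      simp only [SetLike.mem_coe, AddMonoidHom.mem_ker, map_sub, map_add, lift_apply_of]
    · exact sub_eq_zero.mpr (hneg a)
    · exact hquad a b c

@[simp]
theorem lift_gam (f : A → G) (hneg) (hquad) (a : A) : lift f hneg hquad (gam a) = f a :=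
  FreeAbelianGroup.lift_apply_of f a

end Gamma

variable (A : Type) [AddCommGroup A]

def symmetricRelations : AddSubgroup (A ⊗[ℤ] A) :=
  AddSubgroup.closure {x | ∃ a b : A, x = a ⊗ₜ[ℤ] b - b ⊗ₜ[ℤ] a}

def SymSq : Type := A ⊗[ℤ] A ⧸ symmetricRelations A

instance : AddCommGroup (SymSq A) := QuotientAddGroup.Quotient.addCommGroup _

namespace SymSq

def mk : A ⊗[ℤ] A →+ SymSq A := QuotientAddGroup.mk' _

variable {A}

theorem mk_eq_zero_iff {x : A ⊗[ℤ] A} : mk A x = 0 ↔ x ∈ symmetricRelations A :=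
  QuotientAddGroup.eq_zero_iff x

def mul : A →+ A →+ SymSq A :=
  AddMonoidHom.mk' (fun a => (mk A).comp (TensorProduct.mk ℤ A A a).toAddMonoidHom) fun a b => by
    ext c
    simp

theorem mul_apply (a b : A) : mul a b = mk A (a ⊗ₜ b) := rfl

theorem mul_comm (a b : A) : mul a b = mul b a := by
  rw [mul_apply, mul_apply, eq_comm, ← sub_eq_zero, ← map_sub, mk_eq_zero_iff]
  exact AddSubgroup.subset_closure ⟨b, a, rfl⟩

variable (A)

/-- The central extension `0 → SymSq A → Ext A → A → 0` given by the symmetric cocycle `mul`: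
the set `SymSq A × A` with `(s, a) + (t, b) = (s + t + mul a b, a + b)`. -/
@[ext]
structure Ext : Type where
  fst : SymSq A
  snd : A

namespace Ext

variable {A}

instance : Add (Ext A) := ⟨fun u v => ⟨u.fst + v.fst + mul u.snd v.snd, u.snd + v.snd⟩⟩
instance : Zero (Ext A) := ⟨⟨0, 0⟩⟩
instance : Neg (Ext A) := ⟨fun u => ⟨-u.fst + mul u.snd u.snd, -u.snd⟩⟩

@[simp] theorem add_fst (u v : Ext A) : (u + v).fst = u.fst + v.fst + mul u.snd v.snd := rfl
@[simp] theorem add_snd (u v : Ext A) : (u + v).snd = u.snd + v.snd := rfl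
@[simp] theorem zero_fst : (0 : Ext A).fst = 0 := rfl
@[simp] theorem zero_snd : (0 : Ext A).snd = 0 := rfl
@[simp] theorem neg_fst (u : Ext A) : (-u).fst = -u.fst + mul u.snd u.snd := rfl
@[simp] theorem neg_snd (u : Ext A) : (-u).snd = -u.snd := rfl

instance : AddCommGroup (Ext A) where
  add_assoc u v w := by
    ext <;> simp only [add_fst, add_snd, map_add, AddMonoidHom.add_apply] <;> abel
  zero_add u := by ext <;> simp
  add_zero u := by ext <;> simp
  nsmul := nsmulRec
  zsmul := zsmulRec
  neg_add_cancel u := by ext <;> simp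
  add_comm u v := by ext <;> simp only [add_fst, add_snd, mul_comm u.snd] <;> abel

@[simp] theorem sub_fst (u v : Ext A) :
    (u - v).fst = u.fst - v.fst + mul v.snd v.snd - mul u.snd v.snd := by
  rw [sub_eq_add_neg, add_fst, neg_fst, neg_snd, map_neg, mul_comm]
  abel

@[simp] theorem sub_snd (u v : Ext A) : (u - v).snd = u.snd - v.snd := by
  rw [sub_eq_add_neg, add_snd, neg_snd, ← sub_eq_add_neg]

def inl : SymSq A →+ Ext A :=
  AddMonoidHom.mk' (fun s => ⟨s, 0⟩) fun s t => by ext <;> simp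

def sect (a : A) : Ext A := ⟨0, a⟩

theorem sect_add_sub (a b : A) : sect (a + b) - sect a - sect b = inl (-mul a b) := by
  ext <;> simp [sect, inl, mul_comm b a]

def twiceSq : A →+ Ext A :=
  AddMonoidHom.mk' (fun t => ⟨mul t t + mul t t, t + t⟩) fun s t => by
    ext <;> simp only [add_fst, add_snd, map_add, AddMonoidHom.add_apply, mul_comm t s] <;> abel

theorem sect_sub_sect_neg (a : A) : sect a - sect (-a) = twiceSq a := by
  ext <;> simp [sect, twiceSq]

theorem inl_mem_range_twiceSq {s : SymSq A} (hs : inl s ∈ (twiceSq : A →+ Ext A).range) :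
    s = 0 := by
  obtain ⟨t, ht⟩ := hs
  have hfst : mul t t + mul t t = s := congrArg fst ht
  have hsnd : t + t = 0 := congrArg snd ht
  rw [← hfst, ← AddMonoidHom.add_apply, ← map_add, hsnd, map_zero, AddMonoidHom.zero_apply]

theorem sect_quadratic_relation (a b c : A) :
    sect (a + b + c) - sect (a + b) - sect (a + c) - sect (b + c) + sect a + sect b + sect c
      = 0 := by
  calc _ = (sect (a + b + c) - sect (a + b) - sect c) - (sect (a + c) - sect a - sect c)
          - (sect (b + c) - sect b - sect c) := by abel
    _ = inl (-mul (a + b) c) - inl (-mul a c) - inl (-mul b c) := by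
      rw [sect_add_sub, sect_add_sub, sect_add_sub]
    _ = 0 := by rw [map_add, AddMonoidHom.add_apply, neg_add, map_add]; abel

end Ext

end SymSq

namespace Gamma

open SymSq Ext

def toSymSqExt : Gamma A →+ Ext A ⧸ (twiceSq : A →+ Ext A).range :=
  lift (fun a => QuotientAddGroup.mk (sect a))
    (fun a => by
      rw [← sub_eq_zero, ← QuotientAddGroup.mk_sub, QuotientAddGroup.eq_zero_iff,
        sect_sub_sect_neg]
      exact ⟨a, rfl⟩)
    (fun a b c => by
      simp only [← QuotientAddGroup.mk_sub, ← QuotientAddGroup.mk_add, sect_quadratic_relation]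
      rfl)

theorem toSymSqExt_gam (a : A) : toSymSqExt A (gam a) = QuotientAddGroup.mk (sect a) :=
  lift_gam _ _ _ a

variable {A}

theorem toSymSqExt_apply_of_polarization {Θ : A ⊗[ℤ] A →+ Gamma A}
    (hΘ : ∀ a b : A, Θ (a ⊗ₜ[ℤ] b) = gam (a + b) - gam a - gam b) (z : A ⊗[ℤ] A) :
    toSymSqExt A (Θ z) = QuotientAddGroup.mk (inl (-SymSq.mk A z)) := by
  induction z using TensorProduct.induction_on with
  | zero => simp
  | tmul a b =>
    rw [hΘ, map_sub, map_sub, toSymSqExt_gam, toSymSqExt_gam, toSymSqExt_gam,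
      ← QuotientAddGroup.mk_sub, ← QuotientAddGroup.mk_sub, sect_add_sub, mul_apply]
  | add x y hx hy => rw [map_add, map_add, hx, hy, map_add, neg_add, map_add,
      QuotientAddGroup.mk_add]

end Gamma

end

open TensorProduct in
/-- If `Θ : A ⊗ A → Γ(A)` satisfies `Θ (a ⊗ b) = γ(a+b) - γ a - γ b`, then
`ker Θ` is the subgroup generated by the elements `a ⊗ b - b ⊗ a`; consequently `Θ` induces
an injection of `(A ⊗ A)/⟨a ⊗ b - b ⊗ a⟩` into `Γ(A)`. -/
theorem stmt8 (A : Type) [AddCommGroup A]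
    (Θ : TensorProduct ℤ A A →+ Gamma A)
    (hΘ : ∀ a b : A, Θ (a ⊗ₜ[ℤ] b) = gam (a + b) - gam a - gam b) :
    Θ.ker = AddSubgroup.closure {x | ∃ a b : A, x = a ⊗ₜ[ℤ] b - b ⊗ₜ[ℤ] a} ∧
    ∀ x y : TensorProduct ℤ A A, Θ x = Θ y →
      x - y ∈ AddSubgroup.closure {x | ∃ a b : A, x = a ⊗ₜ[ℤ] b - b ⊗ₜ[ℤ] a} := by
  have hker : Θ.ker = symmetricRelations A := by
    refine le_antisymm (fun z hz => ?_) ?_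
    · have h := Gamma.toSymSqExt_apply_of_polarization hΘ z
      rw [AddMonoidHom.mem_ker.mp hz, map_zero, eq_comm, QuotientAddGroup.eq_zero_iff] at h
      rw [← SymSq.mk_eq_zero_iff, ← neg_eq_zero]
      exact SymSq.Ext.inl_mem_range_twiceSq h
    · rw [symmetricRelations, AddSubgroup.closure_le]
      rintro _ ⟨a, b, rfl⟩
      simp only [SetLike.mem_coe, AddMonoidHom.mem_ker, map_sub, hΘ, add_comm b a]
      abel
  refine ⟨hker, fun x y hxy => ?_⟩
  rw [← symmetricRelations, ← hker, AddMonoidHom.mem_ker, map_sub, hxy, sub_self]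
end

section
/- For any abelian group A, the sequence 0 → A/2A → (A ⊗_ℤ A)/⟨a⊗b + b⊗a⟩ → A ∧ A → 0 is exact, where the first map sends a mod 2A to the class of a ⊗ a and the second is the natural quotient map. -/
open TensorProduct

/-- The subgroup of `A ⊗ A` generated by the elements `a ⊗ b + b ⊗ a`. -/
noncomputable def symSubgroup (A : Type) [AddCommGroup A] : AddSubgroup (TensorProduct ℤ A A) :=
  AddSubgroup.closure {x | ∃ a b : A, x = a ⊗ₜ[ℤ] b + b ⊗ₜ[ℤ] a}

/-- The subgroup of `A ⊗ A` generated by the elements `a ⊗ a`. -/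
noncomputable def diagSubgroup (A : Type) [AddCommGroup A] : AddSubgroup (TensorProduct ℤ A A) :=
  AddSubgroup.closure {x | ∃ a : A, x = a ⊗ₜ[ℤ] a}

/-!
Modulo `⟨a ⊗ b + b ⊗ a⟩` the square map `a ↦ a ⊗ a` becomes additive, because
`(a + b) ⊗ (a + b) = a ⊗ a + b ⊗ b + (a ⊗ b + b ⊗ a)`; its range is therefore the image of the
subgroup generated by the `a ⊗ a`, which is exactness in the middle. For injectivity on `A/2A`,
take `a ∉ 2A` and, `A/2A` being an `𝔽₂`-vector space, a homomorphism `L : A → ℤ/2` with `L a = 1`.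
The bilinear form `L x * L y` is symmetric with values in characteristic two, so it kills every
`a ⊗ b + b ⊗ a`, yet it takes the value `1` on `a ⊗ a`.
-/

open QuotientAddGroup

variable {A : Type} [AddCommGroup A]

lemma tmul_add_tmul_mem_symSubgroup (a b : A) : a ⊗ₜ[ℤ] b + b ⊗ₜ[ℤ] a ∈ symSubgroup A :=
  AddSubgroup.subset_closure ⟨a, b, rfl⟩

lemma add_tmul_add_self (a b : A) :
    (a + b) ⊗ₜ[ℤ] (a + b) = a ⊗ₜ[ℤ] a + b ⊗ₜ[ℤ] b + (a ⊗ₜ[ℤ] b + b ⊗ₜ[ℤ] a) := by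
  simp only [add_tmul, tmul_add]
  abel

variable (A) in
noncomputable def squareHom : A →+ A ⊗[ℤ] A ⧸ symSubgroup A where
  toFun a := mk (a ⊗ₜ[ℤ] a)
  map_zero' := by simp
  map_add' a b := by
    rw [add_tmul_add_self, mk_add, mk_add, (eq_zero_iff _).mpr (tmul_add_tmul_mem_symSubgroup a b),
      add_zero]

lemma squareHom_apply (a : A) : squareHom A a = mk (a ⊗ₜ[ℤ] a) := rfl

lemma range_squareHom : (squareHom A).range = (diagSubgroup A).map (mk' (symSubgroup A)) := by
  have himage : mk' (symSubgroup A) '' {x | ∃ a : A, x = a ⊗ₜ[ℤ] a} = Set.range (squareHom A) := by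
    ext
    simp [squareHom_apply, eq_comm]
  rw [diagSubgroup, AddMonoidHom.map_closure, himage, ← AddMonoidHom.coe_range,
    AddSubgroup.closure_eq]

lemma symSubgroup_le_ker_lift {M : Type*} [AddCommGroup M] (B : A →ₗ[ℤ] A →ₗ[ℤ] M)
    (hB : ∀ x y, B x y + B y x = 0) : symSubgroup A ≤ (lift B).toAddMonoidHom.ker := by
  rw [symSubgroup, AddSubgroup.closure_le]
  rintro _ ⟨x, y, rfl⟩
  simpa using hB x y

lemma exists_addMonoidHom_zmodTwo_eq_one {a : A} (ha : a ∉ twoSubgroup A) :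
    ∃ L : A →+ ZMod 2, L a = 1 := by
  have htwo (v : A ⧸ twoSubgroup A) : 2 • v = 0 := by
    induction v using QuotientAddGroup.induction_on with
    | H b => exact (eq_zero_iff _).mpr ⟨b, rfl⟩
  let _ := AddCommGroup.zmodModule htwo
  obtain ⟨l, hl⟩ := Module.Projective.exists_dual_eq_one (ZMod 2)
    (x := (mk a : A ⧸ twoSubgroup A)) (by rwa [Ne, eq_zero_iff])
  exact ⟨l.toAddMonoidHom.comp (mk' (twoSubgroup A)), hl⟩

lemma mem_twoSubgroup_of_tmul_self_mem {a : A} (h : a ⊗ₜ[ℤ] a ∈ symSubgroup A) :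
    a ∈ twoSubgroup A := by
  by_contra ha
  obtain ⟨L, hL⟩ := exists_addMonoidHom_zmodTwo_eq_one ha
  let B : A →ₗ[ℤ] A →ₗ[ℤ] ZMod 2 :=
    (LinearMap.mul ℤ (ZMod 2)).compl₁₂ L.toIntLinearMap L.toIntLinearMap
  have hB : ∀ x y, B x y + B y x = 0 := fun x y => by
    simp [B, mul_comm (L y), CharTwo.add_self_eq_zero]
  have := symSubgroup_le_ker_lift B hB h
  simp [B, hL] at this

/-- For any abelian group `A`, the sequence
`0 → A/2A → (A ⊗ A)/⟨a⊗b + b⊗a⟩ → A ∧ A → 0` is exact, where the first map sends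
`a mod 2A` to the class of `a ⊗ a` and the second is the natural quotient map. -/
theorem stmt10 (A : Type) [AddCommGroup A]
    (f : A ⧸ twoSubgroup A →+ TensorProduct ℤ A A ⧸ symSubgroup A)
    (hf : ∀ a : A, f (QuotientAddGroup.mk a) = QuotientAddGroup.mk (a ⊗ₜ[ℤ] a))
    (g : TensorProduct ℤ A A ⧸ symSubgroup A →+ TensorProduct ℤ A A ⧸ diagSubgroup A)
    (hg : ∀ x : TensorProduct ℤ A A,
      g (QuotientAddGroup.mk x) = QuotientAddGroup.mk x) :
    Function.Injective f ∧ Function.Surjective g ∧ f.range = g.ker := by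
  have hf' : f.comp (mk' (twoSubgroup A)) = squareHom A := AddMonoidHom.ext hf
  have hg' : g.comp (mk' (symSubgroup A)) = mk' (diagSubgroup A) := AddMonoidHom.ext hg
  refine ⟨(injective_iff_map_eq_zero f).mpr fun y hy => ?_, fun z => ?_, ?_⟩
  · induction y using QuotientAddGroup.induction_on with
    | H a =>
      rw [hf, eq_zero_iff] at hy
      exact (eq_zero_iff a).mpr (mem_twoSubgroup_of_tmul_self_mem hy)
  · obtain ⟨t, rfl⟩ := mk_surjective z
    exact ⟨mk t, hg t⟩
  · calc f.range = (squareHom A).range := by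
          rw [← hf', AddMonoidHom.range_comp, (mk' _).range_eq_top.mpr (mk'_surjective _),
            ← AddMonoidHom.range_eq_map]
      _ = (g.ker.comap (mk' (symSubgroup A))).map (mk' (symSubgroup A)) := by
          rw [range_squareHom, AddMonoidHom.comap_ker, hg', ker_mk']
      _ = g.ker := AddSubgroup.map_comap_eq_self_of_surjective (mk'_surjective _) _
end
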